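/- arXiv:2205.08107 — 3 statements merged into one kernel-verified Lean document; each statement's English description precedes it below -/
import Mathlib

section
/- Let r₁, r₂, r₀ ∈ (0,1) satisfy ((1+r₁)/(1−r₁))·((1+r₂)/(1−r₂)) = ((1+r₀)/(1−r₀))². Then (r₁² + r₂²)/(1 + r₁²·r₂²) ≥ 2r₀²/(1 + r₀⁴), with equality if and only if r₁ = r₂. -/
set_option maxHeartbeats 1000000


/-- The computational core of the cross-capacity comparison. -/
theorem stmt11 (r₁ r₂ r₀ : ℝ) (h₁ : r₁ ∈ Set.Ioo (0 : ℝ) 1)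
    (h₂ : r₂ ∈ Set.Ioo (0 : ℝ) 1) (h₀ : r₀ ∈ Set.Ioo (0 : ℝ) 1)
    (hconstr : ((1 + r₁) / (1 - r₁)) * ((1 + r₂) / (1 - r₂)) =
      ((1 + r₀) / (1 - r₀)) ^ 2) :
    (r₁ ^ 2 + r₂ ^ 2) / (1 + r₁ ^ 2 * r₂ ^ 2) ≥ 2 * r₀ ^ 2 / (1 + r₀ ^ 4) ∧
    ((r₁ ^ 2 + r₂ ^ 2) / (1 + r₁ ^ 2 * r₂ ^ 2) = 2 * r₀ ^ 2 / (1 + r₀ ^ 4) ↔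
      r₁ = r₂) := by
  obtain ⟨h1p, h1l⟩ := h₁
  obtain ⟨h2p, h2l⟩ := h₂
  obtain ⟨h0p, h0l⟩ := h₀
  have hd1 : (1:ℝ) - r₁ > 0 := by linarith
  have hd2 : (1:ℝ) - r₂ > 0 := by linarith
  have hd0 : (1:ℝ) - r₀ > 0 := by linarith
  have hconstr' : (1 + r₁) * (1 + r₂) * (1 - r₀)^2 = (1 + r₀)^2 * ((1 - r₁) * (1 - r₂)) := by
    field_simp at hconstr
    linarith [hconstr]
  have hc : (r₁ + r₂) * (1 + r₀^2) = 2 * r₀ * (1 + r₁*r₂) := by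
    linear_combination hconstr' / 2
  have hc2 : (r₁ + r₂)^2 * (1 + r₀^2)^2 = 4 * r₀^2 * (1 + r₁*r₂)^2 := by
    linear_combination ((r₁ + r₂) * (1 + r₀^2) + 2 * r₀ * (1 + r₁*r₂)) * hc
  have h2 : (r₀^2 - r₁*r₂) * (1 - r₀^2*(r₁*r₂)) = (r₁ - r₂)^2 * (1 + r₀^2)^2 / 4 := by
    linear_combination -hc2 / 4
  have ha1 : r₀^2 < 1 := by nlinarith
  have hb1 : r₁*r₂ < 1 := by nlinarith
  have ha0 : (0:ℝ) < r₀^2 := by positivity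
  have hap : (1:ℝ) - r₀^2*(r₁*r₂) > 0 := by
    nlinarith [mul_lt_mul_of_pos_left hb1 ha0]
  have hdpos1 : (0:ℝ) < 1 + r₁^2 * r₂^2 := by positivity
  have hdpos0 : (0:ℝ) < 1 + r₀^4 := by positivity
  have hmain : ((r₁^2 + r₂^2) * (1 + r₀^4) - 2 * r₀^2 * (1 + r₁^2*r₂^2)) * (1 + r₀^2)^2
      = 2 * (1 - r₀^2)^2 * ((r₀^2 - r₁*r₂) * (1 - r₀^2*(r₁*r₂))) := by
    linear_combination (1 + r₀^4) * hc2
  have hkey : (r₀^2 - r₁*r₂) * (1 - r₀^2*(r₁*r₂)) ≥ 0 := by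
    rw [h2]; positivity
  have hc3 : (0:ℝ) < (1 + r₀^2)^2 := by positivity
  have hX : 0 ≤ (r₁^2 + r₂^2) * (1 + r₀^4) - 2 * r₀^2 * (1 + r₁^2*r₂^2) := by
    have h := (mul_nonneg_iff_of_pos_right hc3).mp (by
      rw [hmain]; positivity)
    exact h
  constructor
  · rw [ge_iff_le, div_le_div_iff₀ hdpos0 hdpos1]
    nlinarith [hX]
  constructor
  · intro heq
    rw [div_eq_div_iff hdpos1.ne' hdpos0.ne'] at heq
    have hX0 : (r₁^2 + r₂^2) * (1 + r₀^4) - 2 * r₀^2 * (1 + r₁^2*r₂^2) = 0 := by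
      linear_combination heq
    have hz : 2 * (1 - r₀^2)^2 * ((r₀^2 - r₁*r₂) * (1 - r₀^2*(r₁*r₂))) = 0 := by
      linear_combination (1 + r₀^2)^2 * hX0 - hmain
    have hrr : (r₁ - r₂)^2 * (2 * (1 - r₀^2)^2 * (1 + r₀^2)^2 / 4) = 0 := by
      linear_combination hz - 2 * (1 - r₀^2)^2 * h2
    rcases mul_eq_zero.mp hrr with h | h
    · have h' : r₁ - r₂ = 0 := sq_eq_zero_iff.mp h
      linarith
    · exfalso
      have h1a : (0:ℝ) < (1 - r₀^2)^2 := by nlinarith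
      have : (0:ℝ) < 2 * (1 - r₀^2)^2 * (1 + r₀^2)^2 / 4 :=
        div_pos (mul_pos (mul_pos two_pos h1a) hc3) (by norm_num)
      linarith
  · intro heq
    subst heq
    have hz : (r₁ - r₀) * (1 - r₀*r₁) = 0 := by linear_combination hc / 2
    have h01 : r₀ = r₁ := by
      rcases mul_eq_zero.mp hz with h | h
      · linarith [sub_eq_zero.mp h]
      · exfalso
        have h3 : r₀ * r₁ < r₁ := mul_lt_of_lt_one_left h1p h0l
        linarith
    subst h01
    rw [show (1:ℝ) + r₀^2*r₀^2 = 1 + r₀^4 by ring]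
    ring
end

section
/- Let 0 ≤ r ≤ r₀ < 1 and let A = {z ∈ ℂ : r₀ ≤ |z| < 1}. Define φ_r : A → 𝔻 by φ_r(s·e^{iθ}) = h(s)·e^{iθ} for s ∈ [r₀,1) and θ ∈ ℝ, where c(s) = (s − r₀)/(1 − r₀·s) and h(s) = (r + c(s))/(1 + r·c(s)); equivalently, φ_r(z) has the same argument as z and d(r·e^{iθ}, φ_r(s·e^{iθ})) = d(r₀·e^{iθ}, s·e^{iθ}). Then φ_r is a hyperbolic contraction on A: for all z₁, z₂ ∈ A, d(φ_r(z₁), φ_r(z₂)) ≤ d(z₁, z₂). -/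
set_option maxHeartbeats 1000000 in
lemma stmt13_fact1 (x c : ℝ) (hx : (0:ℝ) < 1+x*c) :
    1-((x+c)/(1+x*c))^2 = (1-x^2)*(1-c^2)/(1+x*c)^2 := by
  field_simp; ring

set_option maxHeartbeats 1000000 in
lemma stmt13_fact2 (x c₁ c₂ : ℝ) (h1 : (0:ℝ) < 1+x*c₁) (h2 : (0:ℝ) < 1+x*c₂) :
    1+((x+c₁)/(1+x*c₁))*((x+c₂)/(1+x*c₂))
      = ((1+x*c₁)*(1+x*c₂)+(x+c₁)*(x+c₂))/((1+x*c₁)*(1+x*c₂)) := by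
  field_simp

set_option maxHeartbeats 1000000 in
lemma stmt13_fact3 (x c₁ c₂ : ℝ) (h1 : (0:ℝ) < 1+x*c₁) (h2 : (0:ℝ) < 1+x*c₂) :
    1-((x+c₁)/(1+x*c₁))*((x+c₂)/(1+x*c₂))
      = ((1-x^2)*(1-c₁*c₂))/((1+x*c₁)*(1+x*c₂)) := by
  field_simp; ring

set_option maxHeartbeats 1000000 in
lemma stmt13_key_eq (r r₀ c₁ c₂ : ℝ)
    (hD₁ : (0:ℝ) < 1 + r₀*c₁) (hD₂ : (0:ℝ) < 1 + r₀*c₂)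
    (hE₁ : (0:ℝ) < 1 + r*c₁) (hE₂ : (0:ℝ) < 1 + r*c₂) :
    (1-((r+c₁)/(1+r*c₁))^2)*(1-((r+c₂)/(1+r*c₂))^2)*(1-((r₀+c₁)/(1+r₀*c₁))*((r₀+c₂)/(1+r₀*c₂)))^2
    = (1-((r₀+c₁)/(1+r₀*c₁))^2)*(1-((r₀+c₂)/(1+r₀*c₂))^2)*(1-((r+c₁)/(1+r*c₁))*((r+c₂)/(1+r*c₂)))^2 := by
  have hQ : (1+r*c₁)^2*(1+r*c₂)^2*((1+r₀*c₁)*(1+r₀*c₂))^2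
      = (1+r₀*c₁)^2*(1+r₀*c₂)^2*((1+r*c₁)*(1+r*c₂))^2 := by ring
  rw [stmt13_fact1 r c₁ hE₁, stmt13_fact1 r c₂ hE₂, stmt13_fact3 r₀ c₁ c₂ hD₁ hD₂,
      stmt13_fact1 r₀ c₁ hD₁, stmt13_fact1 r₀ c₂ hD₂, stmt13_fact3 r c₁ c₂ hE₁ hE₂,
      div_mul_div_comm, div_pow, div_mul_div_comm,
      div_mul_div_comm, div_pow, div_mul_div_comm, hQ]
  congr 1
  ring

set_option maxHeartbeats 1000000 in
lemma stmt13_key_le (r r₀ c₁ c₂ : ℝ) (h0 : 0 ≤ r) (h1 : r ≤ r₀) (h2 : r₀ < 1)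
    (hc1 : 0 ≤ c₁) (hc1' : c₁ < 1) (hc2 : 0 ≤ c₂) (hc2' : c₂ < 1) :
    (1-((r₀+c₁)/(1+r₀*c₁))^2)*(1-((r₀+c₂)/(1+r₀*c₂))^2)*(1+((r+c₁)/(1+r*c₁))*((r+c₂)/(1+r*c₂)))^2
    ≤ (1-((r+c₁)/(1+r*c₁))^2)*(1-((r+c₂)/(1+r*c₂))^2)*(1+((r₀+c₁)/(1+r₀*c₁))*((r₀+c₂)/(1+r₀*c₂)))^2 := by
  have hr0 : 0 ≤ r₀ := le_trans h0 h1
  have hr1 : r < 1 := lt_of_le_of_lt h1 h2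
  have hD₁ : (0:ℝ) < 1 + r₀*c₁ := by nlinarith
  have hD₂ : (0:ℝ) < 1 + r₀*c₂ := by nlinarith
  have hE₁ : (0:ℝ) < 1 + r*c₁ := by nlinarith
  have hE₂ : (0:ℝ) < 1 + r*c₂ := by nlinarith
  have hW : (1+r*c₁)*(1+r*c₂)+(r+c₁)*(r+c₂) ≤ (1+r₀*c₁)*(1+r₀*c₂)+(r₀+c₁)*(r₀+c₂) := by
    nlinarith [mul_nonneg (sub_nonneg.mpr h1) (add_nonneg hc1 hc2),
      mul_nonneg (by nlinarith : (0:ℝ) ≤ r₀^2-r^2) (mul_nonneg hc1 hc2)]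
  have hf1 : (1-r₀^2)*(1-c₁^2) ≤ (1-r^2)*(1-c₁^2) :=
    mul_le_mul_of_nonneg_right (by nlinarith) (by nlinarith)
  have hf2 : (1-r₀^2)*(1-c₂^2) ≤ (1-r^2)*(1-c₂^2) :=
    mul_le_mul_of_nonneg_right (by nlinarith) (by nlinarith)
  have hWpos : (0:ℝ) ≤ (1+r*c₁)*(1+r*c₂)+(r+c₁)*(r+c₂) := by positivity
  have hp1 : (0:ℝ) ≤ (1-r₀^2)*(1-c₁^2) := mul_nonneg (by nlinarith) (by nlinarith)
  have hp2 : (0:ℝ) ≤ (1-r₀^2)*(1-c₂^2) := mul_nonneg (by nlinarith) (by nlinarith)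
  have hq1 : (0:ℝ) ≤ (1-r^2)*(1-c₁^2) := mul_nonneg (by nlinarith) (by nlinarith)
  have hq2 : (0:ℝ) ≤ (1-r^2)*(1-c₂^2) := mul_nonneg (by nlinarith) (by nlinarith)
  have hQ : (1+r₀*c₁)^2*(1+r₀*c₂)^2*((1+r*c₁)*(1+r*c₂))^2
      = (1+r*c₁)^2*(1+r*c₂)^2*((1+r₀*c₁)*(1+r₀*c₂))^2 := by ring
  have hK : (0:ℝ) < (1+r*c₁)^2*(1+r*c₂)^2*((1+r₀*c₁)*(1+r₀*c₂))^2 := by positivity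
  rw [stmt13_fact1 r₀ c₁ hD₁, stmt13_fact1 r₀ c₂ hD₂, stmt13_fact2 r c₁ c₂ hE₁ hE₂,
      stmt13_fact1 r c₁ hE₁, stmt13_fact1 r c₂ hE₂, stmt13_fact2 r₀ c₁ c₂ hD₁ hD₂,
      div_mul_div_comm, div_pow, div_mul_div_comm,
      div_mul_div_comm, div_pow, div_mul_div_comm, hQ, div_le_div_iff_of_pos_right hK]
  gcongr

set_option maxHeartbeats 1000000 in
lemma stmt13_core_abstract (a b A B u : ℝ)
    (ha0 : 0 ≤ a) (hb0 : 0 ≤ b) (hA0 : 0 ≤ A) (hB0 : 0 ≤ B)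
    (ha1 : a < 1) (hb1 : b < 1) (hA1 : A < 1) (hB1 : B < 1)
    (hu : -1 ≤ u) (hu' : u ≤ 1)
    (hkey1 : (1-A^2)*(1-B^2)*(1-a*b)^2 = (1-a^2)*(1-b^2)*(1-A*B)^2)
    (hkey2 : (1-a^2)*(1-b^2)*(1+A*B)^2 ≤ (1-A^2)*(1-B^2)*(1+a*b)^2) :
    (A^2 + B^2 - 2*A*B*u) / (1 + A^2*B^2 - 2*A*B*u)
      ≤ (a^2 + b^2 - 2*a*b*u) / (1 + a^2*b^2 - 2*a*b*u) := by
  have hL : 0 ≤ (1-A^2)*(1-B^2)*(1+a^2*b^2-2*a*b*u) - (1-a^2)*(1-b^2)*(1+A^2*B^2-2*A*B*u) := by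
    have e : 2*((1-A^2)*(1-B^2)*(1+a^2*b^2-2*a*b*u) - (1-a^2)*(1-b^2)*(1+A^2*B^2-2*A*B*u))
        = ((1+u)*((1-A^2)*(1-B^2)*(1-a*b)^2) - (1+u)*((1-a^2)*(1-b^2)*(1-A*B)^2))
          + (1-u)*((1-A^2)*(1-B^2)*(1+a*b)^2 - (1-a^2)*(1-b^2)*(1+A*B)^2) := by ring
    have h7 : 0 ≤ (1-u)*((1-A^2)*(1-B^2)*(1+a*b)^2 - (1-a^2)*(1-b^2)*(1+A*B)^2) :=
      mul_nonneg (by linarith) (by linarith)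
    have h9 : (1+u)*((1-A^2)*(1-B^2)*(1-a*b)^2) = (1+u)*((1-a^2)*(1-b^2)*(1-A*B)^2) := by
      rw [hkey1]
    linarith
  have hab : a*b < 1 := by nlinarith
  have hAB : A*B < 1 := by nlinarith
  have hd2 : (0:ℝ) < 1 + a^2*b^2 - 2*a*b*u := by
    nlinarith [mul_pos (sub_pos.mpr hab) (sub_pos.mpr hab),
      mul_nonneg (mul_nonneg ha0 hb0) (sub_nonneg.mpr hu')]
  have hd1 : (0:ℝ) < 1 + A^2*B^2 - 2*A*B*u := by
    nlinarith [mul_pos (sub_pos.mpr hAB) (sub_pos.mpr hAB),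
      mul_nonneg (mul_nonneg hA0 hB0) (sub_nonneg.mpr hu')]
  rw [div_le_div_iff₀ hd1 hd2]
  nlinarith [hL]

set_option maxHeartbeats 1000000 in
lemma stmt13_core (r r₀ c₁ c₂ u : ℝ) (h0 : 0 ≤ r) (h1 : r ≤ r₀) (h2 : r₀ < 1)
    (hc1 : 0 ≤ c₁) (hc1' : c₁ < 1) (hc2 : 0 ≤ c₂) (hc2' : c₂ < 1)
    (hu : -1 ≤ u) (hu' : u ≤ 1) :
    (((r+c₁)/(1+r*c₁))^2 + ((r+c₂)/(1+r*c₂))^2 - 2*((r+c₁)/(1+r*c₁))*((r+c₂)/(1+r*c₂))*u) /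
      (1 + ((r+c₁)/(1+r*c₁))^2*((r+c₂)/(1+r*c₂))^2 - 2*((r+c₁)/(1+r*c₁))*((r+c₂)/(1+r*c₂))*u)
    ≤ (((r₀+c₁)/(1+r₀*c₁))^2 + ((r₀+c₂)/(1+r₀*c₂))^2 - 2*((r₀+c₁)/(1+r₀*c₁))*((r₀+c₂)/(1+r₀*c₂))*u) /
      (1 + ((r₀+c₁)/(1+r₀*c₁))^2*((r₀+c₂)/(1+r₀*c₂))^2 - 2*((r₀+c₁)/(1+r₀*c₁))*((r₀+c₂)/(1+r₀*c₂))*u) := by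
  have hr0 : 0 ≤ r₀ := le_trans h0 h1
  have hr1 : r < 1 := lt_of_le_of_lt h1 h2
  have hD₁ : (0:ℝ) < 1 + r₀*c₁ := by nlinarith
  have hD₂ : (0:ℝ) < 1 + r₀*c₂ := by nlinarith
  have hE₁ : (0:ℝ) < 1 + r*c₁ := by nlinarith
  have hE₂ : (0:ℝ) < 1 + r*c₂ := by nlinarith
  exact stmt13_core_abstract ((r₀+c₁)/(1+r₀*c₁)) ((r₀+c₂)/(1+r₀*c₂))
    ((r+c₁)/(1+r*c₁)) ((r+c₂)/(1+r*c₂)) u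
    (div_nonneg (by linarith) hD₁.le) (div_nonneg (by linarith) hD₂.le)
    (div_nonneg (by linarith) hE₁.le) (div_nonneg (by linarith) hE₂.le)
    (by rw [div_lt_one hD₁]; nlinarith) (by rw [div_lt_one hD₂]; nlinarith)
    (by rw [div_lt_one hE₁]; nlinarith) (by rw [div_lt_one hE₂]; nlinarith)
    hu hu'
    (stmt13_key_eq r r₀ c₁ c₂ hD₁ hD₂ hE₁ hE₂)
    (stmt13_key_le r r₀ c₁ c₂ h0 h1 h2 hc1 hc1' hc2 hc2')

lemma stmt13_hyp_mono (x y : ℝ) (hx : 0 ≤ x) (hxy : x ≤ y) (hy : y < 1) :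
    Real.log ((1+x)/(1-x)) ≤ Real.log ((1+y)/(1-y)) := by
  have h1x : 0 < 1 - x := by linarith
  have h1y : 0 < 1 - y := by linarith
  have hpos : 0 < (1+x)/(1-x) := by positivity
  apply Real.log_le_log hpos
  rw [div_le_div_iff₀ h1x h1y]
  nlinarith

lemma stmt13_normSq_aux (a b t₁ t₂ : ℝ) :
    Complex.normSq ((a:ℂ) * Complex.exp (t₁*Complex.I) - (b:ℂ) * Complex.exp (t₂*Complex.I)) =
      a^2 + b^2 - 2*a*b*Real.cos (t₁ - t₂) := by
  have p1 := Real.sin_sq_add_cos_sq t₁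
  have p2 := Real.sin_sq_add_cos_sq t₂
  rw [Real.cos_sub]
  simp [Complex.normSq_apply, Complex.exp_ofReal_mul_I_re, Complex.exp_ofReal_mul_I_im,
    Complex.mul_re, Complex.mul_im]
  linear_combination a^2*p1 + b^2*p2

lemma stmt13_normSq_aux2 (a b t₁ t₂ : ℝ) :
    Complex.normSq (1 - (a:ℂ) * Complex.exp (t₁*Complex.I) *
      (starRingEnd ℂ) ((b:ℂ) * Complex.exp (t₂*Complex.I))) =
      1 + a^2*b^2 - 2*a*b*Real.cos (t₁ - t₂) := by
  have p1 := Real.sin_sq_add_cos_sq t₁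
  have p2 := Real.sin_sq_add_cos_sq t₂
  rw [Real.cos_sub]
  simp [Complex.normSq_apply, Complex.exp_ofReal_mul_I_re, Complex.exp_ofReal_mul_I_im,
    Complex.mul_re, Complex.mul_im, map_mul, Complex.conj_ofReal]
  linear_combination (a^2*b^2*(Real.sin t₂^2 + Real.cos t₂^2))*p1 + a^2*b^2*p2

lemma stmt13_abs_pseudo (a b t₁ t₂ : ℝ) (ha : 0 ≤ a) (hb : 0 ≤ b) :
    ‖((a:ℂ) * Complex.exp (t₁*Complex.I) - (b:ℂ) * Complex.exp (t₂*Complex.I)) /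
      (1 - (a:ℂ) * Complex.exp (t₁*Complex.I) * (starRingEnd ℂ) ((b:ℂ) * Complex.exp (t₂*Complex.I)))‖ =
    Real.sqrt ((a^2 + b^2 - 2*a*b*Real.cos (t₁ - t₂)) / (1 + a^2*b^2 - 2*a*b*Real.cos (t₁ - t₂))) := by
  have hu : Real.cos (t₁ - t₂) ≤ 1 := Real.cos_le_one _
  have hnum : (0:ℝ) ≤ a^2 + b^2 - 2*a*b*Real.cos (t₁ - t₂) := by
    nlinarith [sq_nonneg (a-b), mul_nonneg ha hb]
  rw [norm_div, Complex.norm_def, Complex.norm_def, stmt13_normSq_aux, stmt13_normSq_aux2,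
    Real.sqrt_div hnum]

lemma stmt13_F_nonneg (a b u : ℝ) (ha : 0 ≤ a) (hb : 0 ≤ b) (hu' : u ≤ 1) :
    (0:ℝ) ≤ (a^2 + b^2 - 2*a*b*u) / (1 + a^2*b^2 - 2*a*b*u) := by
  apply div_nonneg
  · nlinarith [sq_nonneg (a-b), mul_nonneg (mul_nonneg ha hb) (sub_nonneg.mpr hu')]
  · nlinarith [sq_nonneg (1-a*b), mul_nonneg (mul_nonneg ha hb) (sub_nonneg.mpr hu')]

lemma stmt13_F_lt_one (a b u : ℝ) (ha : 0 ≤ a) (ha1 : a < 1) (hb : 0 ≤ b) (hb1 : b < 1) (hu' : u ≤ 1) :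
    (a^2 + b^2 - 2*a*b*u) / (1 + a^2*b^2 - 2*a*b*u) < 1 := by
  have hab : a*b < 1 := by nlinarith
  have hd : (0:ℝ) < 1 + a^2*b^2 - 2*a*b*u := by
    nlinarith [mul_pos (sub_pos.mpr hab) (sub_pos.mpr hab),
      mul_nonneg (mul_nonneg ha hb) (sub_nonneg.mpr hu')]
  rw [div_lt_one hd]
  nlinarith [mul_pos (by nlinarith : (0:ℝ) < 1-a^2) (by nlinarith : (0:ℝ) < 1-b^2)]

/-- The hyperbolic distance in the unit disk. -/
noncomputable def hypDist (z w : ℂ) : ℝ :=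
  Real.log ((1 + ‖(z - w) / (1 - z * (starRingEnd ℂ) w)‖) /
            (1 - ‖(z - w) / (1 - z * (starRingEnd ℂ) w)‖))

set_option maxHeartbeats 1000000 in
/-- The radial map pulling the annulus `{r₀ ≤ |z| < 1}` toward the circle of
radius `r ≤ r₀` is a hyperbolic contraction. -/
theorem stmt13 (r r₀ : ℝ) (h0 : 0 ≤ r) (h1 : r ≤ r₀) (h2 : r₀ < 1)
    (c h : ℝ → ℝ)
    (hc : ∀ s, c s = (s - r₀) / (1 - r₀ * s))
    (hh : ∀ s, h s = (r + c s) / (1 + r * c s)) :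
    ∀ s₁ ∈ Set.Ico r₀ 1, ∀ s₂ ∈ Set.Ico r₀ 1, ∀ θ₁ θ₂ : ℝ,
      hypDist ((h s₁ : ℂ) * Complex.exp (θ₁ * Complex.I))
          ((h s₂ : ℂ) * Complex.exp (θ₂ * Complex.I)) ≤
        hypDist ((s₁ : ℂ) * Complex.exp (θ₁ * Complex.I))
          ((s₂ : ℂ) * Complex.exp (θ₂ * Complex.I)) := by
  intro s₁ hs₁ s₂ hs₂ θ₁ θ₂
  obtain ⟨hs₁l, hs₁u⟩ := hs₁
  obtain ⟨hs₂l, hs₂u⟩ := hs₂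
  have hr0 : 0 ≤ r₀ := le_trans h0 h1
  have hr1 : r < 1 := lt_of_le_of_lt h1 h2
  set c₁ := c s₁ with hc₁def
  set c₂ := c s₂ with hc₂def
  have hd₁ : (0:ℝ) < 1 - r₀*s₁ := by nlinarith
  have hd₂ : (0:ℝ) < 1 - r₀*s₂ := by nlinarith
  have hc1 : 0 ≤ c₁ := by
    rw [hc₁def, hc s₁]; exact div_nonneg (by linarith) hd₁.le
  have hc2 : 0 ≤ c₂ := by
    rw [hc₂def, hc s₂]; exact div_nonneg (by linarith) hd₂.le
  have hc1' : c₁ < 1 := by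
    rw [hc₁def, hc s₁, div_lt_one hd₁]; nlinarith
  have hc2' : c₂ < 1 := by
    rw [hc₂def, hc s₂, div_lt_one hd₂]; nlinarith
  have hD₁ : (0:ℝ) < 1 + r₀*c₁ := by nlinarith
  have hD₂ : (0:ℝ) < 1 + r₀*c₂ := by nlinarith
  have hE₁ : (0:ℝ) < 1 + r*c₁ := by nlinarith
  have hE₂ : (0:ℝ) < 1 + r*c₂ := by nlinarith
  have hlin₁ : c₁*(1 - r₀*s₁) = s₁ - r₀ := by
    rw [hc₁def, hc s₁]; exact div_mul_cancel₀ _ hd₁.ne'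
  have hlin₂ : c₂*(1 - r₀*s₂) = s₂ - r₀ := by
    rw [hc₂def, hc s₂]; exact div_mul_cancel₀ _ hd₂.ne'
  have hs₁eq : s₁ = (r₀+c₁)/(1+r₀*c₁) := by
    rw [eq_div_iff (ne_of_gt hD₁)]; nlinarith [hlin₁]
  have hs₂eq : s₂ = (r₀+c₂)/(1+r₀*c₂) := by
    rw [eq_div_iff (ne_of_gt hD₂)]; nlinarith [hlin₂]
  have hh₁ : h s₁ = (r+c₁)/(1+r*c₁) := hh s₁
  have hh₂ : h s₂ = (r+c₂)/(1+r*c₂) := hh s₂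
  have hA0 : 0 ≤ h s₁ := by rw [hh₁]; exact div_nonneg (by linarith) hE₁.le
  have hB0 : 0 ≤ h s₂ := by rw [hh₂]; exact div_nonneg (by linarith) hE₂.le
  have hs₁0 : 0 ≤ s₁ := le_trans hr0 hs₁l
  have hs₂0 : 0 ≤ s₂ := le_trans hr0 hs₂l
  have hu1 : -1 ≤ Real.cos (θ₁ - θ₂) := Real.neg_one_le_cos _
  have hu2 : Real.cos (θ₁ - θ₂) ≤ 1 := Real.cos_le_one _
  unfold hypDist
  rw [stmt13_abs_pseudo (h s₁) (h s₂) θ₁ θ₂ hA0 hB0, stmt13_abs_pseudo s₁ s₂ θ₁ θ₂ hs₁0 hs₂0]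
  have hcore : ((h s₁)^2 + (h s₂)^2 - 2*(h s₁)*(h s₂)*Real.cos (θ₁-θ₂)) /
      (1 + (h s₁)^2*(h s₂)^2 - 2*(h s₁)*(h s₂)*Real.cos (θ₁-θ₂))
      ≤ (s₁^2 + s₂^2 - 2*s₁*s₂*Real.cos (θ₁-θ₂)) /
      (1 + s₁^2*s₂^2 - 2*s₁*s₂*Real.cos (θ₁-θ₂)) := by
    rw [hh₁, hh₂, hs₁eq, hs₂eq]
    exact stmt13_core r r₀ c₁ c₂ (Real.cos (θ₁-θ₂)) h0 h1 h2 hc1 hc1' hc2 hc2' hu1 hu2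
  apply stmt13_hyp_mono _ _ (Real.sqrt_nonneg _) (Real.sqrt_le_sqrt hcore)
  have hFa_lt := stmt13_F_lt_one s₁ s₂ (Real.cos (θ₁-θ₂)) hs₁0 hs₁u hs₂0 hs₂u hu2
  have hFa0 := stmt13_F_nonneg s₁ s₂ (Real.cos (θ₁-θ₂)) hs₁0 hs₂0 hu2
  calc Real.sqrt ((s₁^2 + s₂^2 - 2*s₁*s₂*Real.cos (θ₁-θ₂)) /
      (1 + s₁^2*s₂^2 - 2*s₁*s₂*Real.cos (θ₁-θ₂))) < Real.sqrt 1 :=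
        Real.sqrt_lt_sqrt hFa0 (by simpa using hFa_lt)
    _ = 1 := Real.sqrt_one
end

section
/- For all real numbers a, b ∈ [0,1) and all α ∈ [0, π/2], the quantity Φ(a,b,α) = (a(1−a²) − (a(1−b²) + b(1−a²))·cos α + b(1−b²))·(1−ab) + (a² − 2ab·cos α + b²)·(a(1−b²) + b(1−a²)) satisfies Φ(a,b,α) ≥ 0, with Φ(a,b,0) = 0. -/
/-- Nonnegativity of the quantity `Φ(a,b,α)` controlling the derivative of the
squared pseudo-hyperbolic distance under radial motion, with `Φ(a,b,0) = 0`. -/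
theorem stmt14 (a b α : ℝ) (ha : a ∈ Set.Ico (0 : ℝ) 1)
    (hb : b ∈ Set.Ico (0 : ℝ) 1) (hα : α ∈ Set.Icc (0 : ℝ) (Real.pi / 2)) :
    0 ≤ (a * (1 - a ^ 2) - (a * (1 - b ^ 2) + b * (1 - a ^ 2)) * Real.cos α +
          b * (1 - b ^ 2)) * (1 - a * b) +
        (a ^ 2 - 2 * a * b * Real.cos α + b ^ 2) *
          (a * (1 - b ^ 2) + b * (1 - a ^ 2)) ∧
    (a * (1 - a ^ 2) - (a * (1 - b ^ 2) + b * (1 - a ^ 2)) * Real.cos 0 +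
          b * (1 - b ^ 2)) * (1 - a * b) +
        (a ^ 2 - 2 * a * b * Real.cos 0 + b ^ 2) *
          (a * (1 - b ^ 2) + b * (1 - a ^ 2)) = 0 := by
  obtain ⟨ha0, ha1⟩ := ha
  obtain ⟨hb0, hb1⟩ := hb
  have hab : a * b < 1 := by nlinarith
  have key : ∀ c : ℝ,
      (a * (1 - a ^ 2) - (a * (1 - b ^ 2) + b * (1 - a ^ 2)) * c +
          b * (1 - b ^ 2)) * (1 - a * b) +
        (a ^ 2 - 2 * a * b * c + b ^ 2) *
          (a * (1 - b ^ 2) + b * (1 - a ^ 2)) =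
      (1 - c) * ((a + b) * ((1 - a * b) * (1 + a * b))) := by
    intro c; ring
  constructor
  · rw [key]
    have hc : Real.cos α ≤ 1 := Real.cos_le_one α
    have h2 : (0:ℝ) ≤ (a + b) * ((1 - a * b) * (1 + a * b)) := by
      have : (0:ℝ) ≤ 1 + a * b := by nlinarith
      have : (0:ℝ) ≤ 1 - a * b := by linarith
      positivity
    nlinarith
  · rw [key, Real.cos_zero]; ring
end
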